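/- arXiv:1910.01499 — 2 statements merged into one kernel-verified Lean document; each statement's English description precedes it below -/
import Mathlib

section
/- Let φ : G′ → G be a harmonic morphism of graphs with G connected. Then the sum Σ{ d_φ(v′) : v′ ∈ V(G′), φ(v′) = v } is the same for every vertex v ∈ V(G); denoting this common value deg(φ), one moreover has deg(φ) = Σ{ d_φ(e′) : e′ ∈ E(G′), φ(e′) = e } for every edge e ∈ E(G) and deg(φ) = Σ{ d_φ(p′) : p′ ∈ L(G′), φ(p′) = p } for every leg p ∈ L(G). Furthermore, if deg(φ) > 0 then φ : X(G′) → X(G) is surjective. -/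
/-!
The total degree `∑ {d_φ(x') : φ(x') = x}` of the fibre over an arbitrary `x ∈ X(G)` is unchanged
by the involution, since `d_φ` is `ι`-invariant, and by passing to the root, since harmonicity at
the vertices over `r(h)` distributes the fibre over a half-edge `h` among them. Hence it is
constant on a connected `G`. Over a vertex it is the vertex fibre sum, because half-edges mapped to
a vertex have degree `0`; over a half of an edge only halves of edges lie, and over a leg only
legs. A positive constant makes every fibre nonempty.
-/

namespace TropDR

open Finset

/-- `Finset.filter` with classical decidability. -/
noncomputable def cfilter {α : Type*} (p : α → Prop) (s : Finset α) : Finset α :=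
  @Finset.filter α p (Classical.decPred p) s

/-- A graph with legs: a finite set `X` together with an idempotent root map `rt`
and an involution `inv` fixing every root vertex. -/
structure PGraph where
  X : Type
  [fintypeX : Fintype X]
  [decEqX : DecidableEq X]
  rt : X → X
  inv : X → X
  rt_idem : ∀ x, rt (rt x) = rt x
  inv_invol : ∀ x, inv (inv x) = x
  inv_fix_rt : ∀ x, inv (rt x) = rt x

attribute [instance] PGraph.fintypeX PGraph.decEqX

namespace PGraph

variable (G : PGraph)

/-- Vertices are the fixed points (= the image) of the root map. -/
def IsVertex (x : G.X) : Prop := G.rt x = x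

/-- Half-edges are the non-vertices. -/
def IsHalf (x : G.X) : Prop := G.rt x ≠ x

/-- Legs are the `inv`-fixed half-edges. -/
def IsLeg (x : G.X) : Prop := G.IsHalf x ∧ G.inv x = x

/-- Halves of genuine edges: half-edges moved by the involution. -/
def IsEdgeHalf (x : G.X) : Prop := G.IsHalf x ∧ G.inv x ≠ x

noncomputable def vertexSet : Finset G.X := cfilter (fun x => G.IsVertex x) Finset.univ

noncomputable def legSet : Finset G.X := cfilter (fun x => G.IsLeg x) Finset.univ

noncomputable def edgeHalfSet : Finset G.X := cfilter (fun x => G.IsEdgeHalf x) Finset.univ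

/-- Tangent directions at a vertex `v`: half-edges rooted at `v`. -/
noncomputable def tangents (v : G.X) : Finset G.X :=
  cfilter (fun h => G.IsHalf h ∧ G.rt h = v) Finset.univ

noncomputable def valence (v : G.X) : ℕ := (G.tangents v).card

/-- The number of edges: half the number of edge half-edges. -/
noncomputable def numEdges : ℕ := G.edgeHalfSet.card / 2

noncomputable def numLegs : ℕ := G.legSet.card

noncomputable def numVertices : ℕ := G.vertexSet.card

/-- Connectedness: the equivalence relation generated by `x ∼ rt x` and `x ∼ inv x`
has a single class (and `X` is nonempty). -/
def Connected : Prop :=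
  Nonempty G.X ∧ ∀ x y : G.X, Relation.EqvGen (fun a b => G.rt a = b ∨ G.inv a = b) x y

/-- A subgraph: a subset of `X` closed under the root map and the involution. -/
def IsSubgraph (F : Finset G.X) : Prop :=
  (∀ x ∈ F, G.rt x ∈ F) ∧ (∀ x ∈ F, G.inv x ∈ F)

/-- Valency of `v` inside a subgraph `F`. -/
noncomputable def valIn (F : Finset G.X) (v : G.X) : ℕ := (G.tangents v ∩ F).card

end PGraph

/-- A morphism of graphs: commutes with the root maps and involutions,
and maps no edge into a leg. -/
structure GraphHom (G' G : PGraph) where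
  toFun : G'.X → G.X
  map_rt : ∀ x, toFun (G'.rt x) = G.rt (toFun x)
  map_inv : ∀ x, toFun (G'.inv x) = G.inv (toFun x)
  edge_not_leg : ∀ h, G'.IsEdgeHalf h → ¬ G.IsLeg (toFun h)

/-- A harmonic morphism of graphs: a graph morphism together with a degree function. -/
structure HarmonicHom (G' G : PGraph) extends GraphHom G' G where
  deg : G'.X → ℕ
  deg_edge : ∀ h, G'.IsEdgeHalf h → deg (G'.inv h) = deg h
  deg_zero_iff : ∀ h, G'.IsHalf h → (deg h = 0 ↔ G.IsVertex (toFun h))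
  harmonic : ∀ v', G'.IsVertex v' → ∀ h, G.IsHalf h → G.rt h = toFun v' →
    deg v' = ∑ h' ∈ cfilter (fun h' => toFun h' = h) (G'.tangents v'), deg h'

namespace HarmonicHom

variable {G' G : PGraph} (φ : HarmonicHom G' G)

/-- A harmonic morphism is finite if it has positive degree on every half-edge. -/
def Finite : Prop := ∀ h, G'.IsHalf h → 0 < φ.deg h

/-- The sum of the degrees over the vertex fiber of `v`. -/
noncomputable def vertexFiberDeg (v : G.X) : ℕ :=
  ∑ v' ∈ cfilter (fun v' => φ.toFun v' = v) G'.vertexSet, φ.deg v'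

end HarmonicHom

/-- A weighted graph: a graph together with a genus function on (all elements;
only the values at vertices are relevant). -/
structure WGraph extends PGraph where
  gw : X → ℕ

namespace WGraph

variable (G : WGraph)

/-- The genus of a (connected) weighted graph. -/
noncomputable def genus : ℤ :=
  (G.toPGraph.numEdges : ℤ) - (G.toPGraph.numVertices : ℤ) + 1 +
    ∑ v ∈ G.toPGraph.vertexSet, (G.gw v : ℤ)

/-- The Euler characteristic of a vertex. -/
noncomputable def chiV (v : G.X) : ℤ :=
  2 - 2 * (G.gw v : ℤ) - (G.toPGraph.valence v : ℤ)

/-- The Euler characteristic of a (connected) weighted graph. -/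
noncomputable def chi : ℤ := 2 - 2 * G.genus - (G.toPGraph.numLegs : ℤ)

end WGraph

/-- The ramification degree of a (finite) harmonic morphism of weighted graphs at `v'`. -/
noncomputable def ram {G' G : WGraph} (φ : HarmonicHom G'.toPGraph G.toPGraph) (v' : G'.X) : ℤ :=
  (φ.deg v' : ℤ) * G.chiV (φ.toFun v') - G'.chiV v'

def Unramified {G' G : WGraph} (φ : HarmonicHom G'.toPGraph G.toPGraph) : Prop :=
  ∀ v', G'.toPGraph.IsVertex v' → ram φ v' = 0

def Effective {G' G : WGraph} (φ : HarmonicHom G'.toPGraph G.toPGraph) : Prop :=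
  ∀ v', G'.toPGraph.IsVertex v' → 0 ≤ ram φ v'

@[simp]
lemma mem_cfilter {α : Type*} {p : α → Prop} {s : Finset α} {x : α} :
    x ∈ cfilter p s ↔ x ∈ s ∧ p x := by
  classical
  exact mem_filter

namespace PGraph

variable {G : PGraph}

lemma IsVertex.inv_eq {x : G.X} (hx : G.IsVertex x) : G.inv x = x :=
  (congrArg G.inv hx).symm.trans ((G.inv_fix_rt x).trans hx)

lemma isEdgeHalf_of_inv_ne {x : G.X} (hx : G.inv x ≠ x) : G.IsEdgeHalf x :=
  ⟨fun hv => hx (IsVertex.inv_eq hv), hx⟩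

end PGraph

namespace HarmonicHom

variable {G' G : PGraph} (φ : HarmonicHom G' G)

lemma isHalf_of_isHalf_toFun {x' : G'.X} (hx : G.IsHalf (φ.toFun x')) : G'.IsHalf x' :=
  fun hv => hx ((φ.map_rt x').symm.trans (congrArg φ.toFun hv))

lemma isEdgeHalf_of_isEdgeHalf_toFun {x' : G'.X} (hx : G.IsEdgeHalf (φ.toFun x')) :
    G'.IsEdgeHalf x' :=
  PGraph.isEdgeHalf_of_inv_ne fun h => hx.2 (by rw [← φ.map_inv, h])

lemma isLeg_of_isLeg_toFun {x' : G'.X} (hx : G.IsLeg (φ.toFun x')) : G'.IsLeg x' := by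
  have hhalf := φ.isHalf_of_isHalf_toFun hx.1
  refine ⟨hhalf, ?_⟩
  by_contra hne
  exact φ.edge_not_leg x' ⟨hhalf, hne⟩ hx

lemma deg_inv (x' : G'.X) : φ.deg (G'.inv x') = φ.deg x' := by
  by_cases hx : G'.inv x' = x'
  · rw [hx]
  · exact φ.deg_edge x' (PGraph.isEdgeHalf_of_inv_ne hx)

noncomputable def fiberDeg (x : G.X) : ℕ :=
  ∑ x' ∈ cfilter (fun x' => φ.toFun x' = x) univ, φ.deg x'

lemma fiberDeg_eq_sum_cfilter {x : G.X} {s : Finset G'.X}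
    (hs : ∀ x', φ.toFun x' = x → x' ∉ s → φ.deg x' = 0) :
    φ.fiberDeg x = ∑ x' ∈ cfilter (fun x' => φ.toFun x' = x) s, φ.deg x' := by
  refine (sum_subset (fun x' hx' => ?_) fun x' hx' hx's => ?_).symm
  · simpa using (mem_cfilter.1 hx').2
  · simp only [mem_cfilter, mem_univ, true_and, not_and] at hx' hx's
    exact hs x' hx' fun h => hx's h hx'

lemma fiberDeg_of_isVertex {v : G.X} (hv : G.IsVertex v) :
    φ.fiberDeg v = φ.vertexFiberDeg v :=
  φ.fiberDeg_eq_sum_cfilter fun x' hx' hnot =>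
    (φ.deg_zero_iff x' fun hv' => hnot (mem_cfilter.2 ⟨mem_univ _, hv'⟩)).2 (hx' ▸ hv)

lemma fiberDeg_of_isEdgeHalf {h : G.X} (hh : G.IsEdgeHalf h) :
    φ.fiberDeg h = ∑ h' ∈ cfilter (fun h' => φ.toFun h' = h) G'.edgeHalfSet, φ.deg h' :=
  φ.fiberDeg_eq_sum_cfilter fun x' hx' hnot => absurd
    (by simpa [PGraph.edgeHalfSet] using φ.isEdgeHalf_of_isEdgeHalf_toFun (hx' ▸ hh)) hnot

lemma fiberDeg_of_isLeg {p : G.X} (hp : G.IsLeg p) :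
    φ.fiberDeg p = ∑ p' ∈ cfilter (fun p' => φ.toFun p' = p) G'.legSet, φ.deg p' :=
  φ.fiberDeg_eq_sum_cfilter fun x' hx' hnot => absurd
    (by simpa [PGraph.legSet] using φ.isLeg_of_isLeg_toFun (hx' ▸ hp)) hnot

lemma fiberDeg_inv (x : G.X) : φ.fiberDeg (G.inv x) = φ.fiberDeg x :=
  sum_equiv (Function.Involutive.toPerm _ G'.inv_invol)
    (fun x' => by
      change x' ∈ cfilter _ univ ↔ G'.inv x' ∈ cfilter _ univ
      simp only [mem_cfilter, mem_univ, true_and, φ.map_inv]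
      exact (Function.Involutive.eq_iff G.inv_invol).symm)
    fun x' _ => (φ.deg_inv x').symm

lemma fiberDeg_rt (x : G.X) : φ.fiberDeg (G.rt x) = φ.fiberDeg x := by
  by_cases hx : G.IsVertex x
  · rw [hx]
  have hfiber : ∀ v' ∈ cfilter (fun v' => φ.toFun v' = G.rt x) G'.vertexSet,
      cfilter (fun h' => φ.toFun h' = x) (G'.tangents v') =
        {h' ∈ cfilter (fun h' => φ.toFun h' = x) univ | G'.rt h' = v'} := fun v' _ => by
    ext h'
    simp only [PGraph.tangents, mem_cfilter, mem_filter, mem_univ, true_and]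
    exact ⟨fun ⟨⟨_, hrt⟩, hφ⟩ => ⟨hφ, hrt⟩,
      fun ⟨hφ, hrt⟩ => ⟨⟨φ.isHalf_of_isHalf_toFun (hφ ▸ hx), hrt⟩, hφ⟩⟩
  have hroot : ∀ x' ∈ cfilter (fun x' => φ.toFun x' = x) univ,
      G'.rt x' ∈ cfilter (fun v' => φ.toFun v' = G.rt x) G'.vertexSet := fun x' hx' => by
    simp_all [PGraph.vertexSet, PGraph.IsVertex, G'.rt_idem, φ.map_rt]
  calc φ.fiberDeg (G.rt x)
      = ∑ v' ∈ cfilter (fun v' => φ.toFun v' = G.rt x) G'.vertexSet,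
          ∑ h' ∈ cfilter (fun h' => φ.toFun h' = x) (G'.tangents v'), φ.deg h' := by
        rw [φ.fiberDeg_of_isVertex (G.rt_idem x), vertexFiberDeg]
        refine sum_congr rfl fun v' hv' => ?_
        simp only [mem_cfilter, PGraph.vertexSet, mem_univ, true_and] at hv'
        exact φ.harmonic v' hv'.1 x hx hv'.2.symm
    _ = φ.fiberDeg x := by
        rw [sum_congr rfl fun v' hv' => congrArg (∑ h' ∈ ·, φ.deg h') (hfiber v' hv')]
        exact sum_fiberwise_of_maps_to hroot φ.deg

lemma fiberDeg_eq_of_connected (hG : G.Connected) (x y : G.X) :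
    φ.fiberDeg x = φ.fiberDeg y :=
  congrArg (Quot.lift φ.fiberDeg fun a b hab => by
      rcases hab with rfl | rfl
      exacts [(φ.fiberDeg_rt a).symm, (φ.fiberDeg_inv a).symm])
    (Quot.eqvGen_sound (hG.2 x y))

lemma surjective_of_fiberDeg_pos (hpos : ∀ x, 0 < φ.fiberDeg x) : Function.Surjective φ.toFun :=
  fun x => by
    obtain ⟨x', hx', -⟩ := exists_ne_zero_of_sum_ne_zero (hpos x).ne'
    exact ⟨x', (mem_cfilter.1 hx').2⟩

end HarmonicHom

/-- Let `φ : G' → G` be a harmonic morphism of graphs with `G` connected.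
Then the fiber sum `Σ { d_φ(v') : v' ∈ V(G'), φ(v') = v }` is the same for every vertex
`v ∈ V(G)`; this common value `deg φ` also equals, for every edge `e` of `G`, the sum of
`d_φ` over the edges of `G'` mapping to `e` (expressed here as the sum over the fiber of
either half-edge of `e`, using that `d_φ` takes equal values on the two halves of an edge
and that each edge over `e` contributes exactly one half-edge over a chosen half of `e`),
and, for every leg `p` of `G`, the sum of `d_φ` over the legs of `G'` mapping to `p`.
Moreover, if `deg φ > 0` then `φ` is surjective. -/
theorem degree_of_harmonic_morphism_well_defined
    (G' G : PGraph) (hG : G.Connected) (φ : HarmonicHom G' G) :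
    (∀ v, G.IsVertex v → ∀ w, G.IsVertex w →
      φ.vertexFiberDeg v = φ.vertexFiberDeg w) ∧
    (∀ v, G.IsVertex v → ∀ h, G.IsEdgeHalf h →
      φ.vertexFiberDeg v =
        ∑ h' ∈ cfilter (fun h' => φ.toFun h' = h) G'.edgeHalfSet, φ.deg h') ∧
    (∀ v, G.IsVertex v → ∀ p, G.IsLeg p →
      φ.vertexFiberDeg v =
        ∑ p' ∈ cfilter (fun p' => φ.toFun p' = p) G'.legSet, φ.deg p') ∧
    ((∃ v, G.IsVertex v ∧ 0 < φ.vertexFiberDeg v) → Function.Surjective φ.toFun) := by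
  have hconst := φ.fiberDeg_eq_of_connected hG
  refine ⟨fun v hv w hw => ?_, fun v hv h hh => ?_, fun v hv p hp => ?_, ?_⟩
  · rw [← φ.fiberDeg_of_isVertex hv, ← φ.fiberDeg_of_isVertex hw, hconst]
  · rw [← φ.fiberDeg_of_isVertex hv, ← φ.fiberDeg_of_isEdgeHalf hh, hconst]
  · rw [← φ.fiberDeg_of_isVertex hv, ← φ.fiberDeg_of_isLeg hp, hconst]
  · rintro ⟨v, hv, hpos⟩
    rw [← φ.fiberDeg_of_isVertex hv] at hpos
    exact φ.surjective_of_fiberDeg_pos fun x => hconst v x ▸ hpos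

end TropDR
end

section
/- Let d ≥ 1 and m ≥ 1 be integers. For each i = 1,…,m let a_i = (a_{i1},…,a_{ik_i}) be a partition of d (a tuple of positive integers with a_{i1}+⋯+a_{ik_i} = d) of length k_i, and suppose t := k_1 + ⋯ + k_m − d(m−1) ≥ 1. Then there exist a partition c = (c_1,…,c_t) of d of length t and, for each i, a map r_i : {1,…,k_i} → {1,…,t} such that for all i and j one has Σ{ a_{ip} : r_i(p) = j } = c_j (so each r_i exhibits a_i as a refinement of c), and such that for every j = 1,…,t, Σ_{i=1}^m #{ p : r_i(p) = j } = c_j·(m−1) + 1. -/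
/-!
Encode each partition `a i` by the set `S i ⊆ (0, d]` of its partial sums and walk along
`0, 1, …, d`, stepping by `#{i | x ∈ S i} - (m - 1)` at `x`. Steps are at most `1`, with equality
exactly at the points common to all `S i`, and the walk ends at height `t`. Cutting it at the
first-passage times of the heights `1, …, t - 1` and at `d` gives common points
`0 = Y 0 < ⋯ < Y t = d` between which the walk gains exactly `1`. Take `c j = Y (j + 1) - Y j` and
let `r i` send a part to the stretch containing its right end; the gain `1` on a stretch is the
required count of parts.
-/

open Finset

section Walk

variable {w : ℕ → ℤ}

theorem exists_sum_Ioc_eq_of_le_one (hw : ∀ x, w x ≤ 1) {v : ℕ} (hv : 1 ≤ v) :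
    ∀ {n : ℕ}, (v : ℤ) ≤ ∑ x ∈ Ioc 0 n, w x →
      ∃ y ≤ n, ∑ x ∈ Ioc 0 y, w x = v ∧ w y = 1
  | 0, h => by simp at h; omega
  | n + 1, h => by
    rw [sum_Ioc_succ_top (Nat.zero_le n)] at h
    by_cases hn : (v : ℤ) ≤ ∑ x ∈ Ioc 0 n, w x
    · obtain ⟨y, hyn, hy⟩ := exists_sum_Ioc_eq_of_le_one hw hv hn
      exact ⟨y, hyn.trans n.le_succ, hy⟩
    · have := hw (n + 1)
      refine ⟨n + 1, le_rfl, ?_, by omega⟩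
      rw [sum_Ioc_succ_top (Nat.zero_le n)]
      omega

theorem exists_monotone_cuts_sum_Ioc_eq_one (hw : ∀ x, w x ≤ 1) {t : ℕ} (ht : 1 ≤ t) :
    ∀ {n : ℕ}, ∑ x ∈ Ioc 0 n, w x = t →
      ∃ Y : ℕ → ℕ, Monotone Y ∧ Y 0 = 0 ∧ Y t = n ∧
        ∀ j < t, ∑ x ∈ Ioc (Y j) (Y (j + 1)), w x = 1 ∧ (0 < j → w (Y j) = 1) := by
  induction t, ht using Nat.le_induction with
  | base =>
    intro n hn
    refine ⟨fun j => if j = 0 then 0 else n, fun i j hij => ?_, rfl, rfl, ?_⟩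
    · dsimp only
      split_ifs <;> omega
    · intro j hj
      obtain rfl : j = 0 := by omega
      simpa using hn
  | succ t ht ih =>
    intro n hn
    obtain ⟨y, hyn, hy, hwy⟩ := exists_sum_Ioc_eq_of_le_one hw ht (n := n) (by omega)
    obtain ⟨Y, hY, hY0, hYt, hYw⟩ := ih hy
    refine ⟨fun j => if j ≤ t then Y j else n, monotone_nat_of_le_succ fun j => ?_, by simpa,
      by simp, fun j hj => ?_⟩
    · split_ifs with h₁ h₂ <;>
        first | omega | exact hY j.le_succ | exact (hY h₁).trans (hYt ▸ hyn)
    · rcases Nat.lt_succ_iff_lt_or_eq.mp hj with hj | rfl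
      · simpa [hj.le, Nat.succ_le_of_lt hj] using hYw j hj
      · have := sum_Ioc_consecutive w (Nat.zero_le y) hyn
        simp only [le_refl, if_true, hYt, Nat.not_succ_le_self, if_false]
        exact ⟨by omega, fun _ => hwy⟩

end Walk

section CumSum

variable {k : ℕ} (a : Fin k → ℕ)

def cumSum (p : Fin k) : ℕ := ∑ q ∈ Iic p, a q

variable {a}

theorem cumSum_strictMono (ha : ∀ p, 0 < a p) : StrictMono (cumSum a) := fun p q hpq =>
  sum_lt_sum_of_subset (Iic_subset_Iic.mpr hpq.le) (mem_Iic.mpr le_rfl) (by simpa using hpq)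
    (ha q) fun _ _ _ => Nat.zero_le _

theorem cumSum_pos (ha : ∀ p, 0 < a p) (p : Fin k) : 0 < cumSum a p :=
  (ha p).trans_le (single_le_sum (fun _ _ => Nat.zero_le _) (mem_Iic.mpr le_rfl))

theorem cumSum_le_sum (p : Fin k) : cumSum a p ≤ ∑ q, a q :=
  sum_le_sum_of_subset (subset_univ _)

theorem sum_mem_image_cumSum (h : ∑ q, a q ≠ 0) : ∑ q, a q ∈ univ.image (cumSum a) := by
  obtain ⟨n, rfl⟩ : ∃ n, k = n + 1 := Nat.exists_eq_succ_of_ne_zero (by rintro rfl; simp at h)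
  exact mem_image.mpr ⟨Fin.last n, mem_univ _, by rw [cumSum, ← Fin.top_eq_last, Iic_top]⟩

theorem image_cumSum_subset_Ioc (ha : ∀ p, 0 < a p) :
    univ.image (cumSum a) ⊆ Ioc 0 (∑ q, a q) := by
  simp only [subset_iff, mem_image, mem_univ, true_and, mem_Ioc, forall_exists_index]
  rintro _ p rfl
  exact ⟨cumSum_pos ha p, cumSum_le_sum p⟩

theorem sum_filter_cumSum_le (ha : ∀ p, 0 < a p) {v : ℕ}
    (hv : v ∈ insert 0 (univ.image (cumSum a))) : ∑ p with cumSum a p ≤ v, a p = v := by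
  obtain rfl | ⟨p, -, rfl⟩ := by simpa only [mem_insert, mem_image] using hv
  · simp [(cumSum_pos ha _).ne']
  · rw [show ({q | cumSum a q ≤ cumSum a p} : Finset (Fin k)) = Iic p by
      ext; simp [(cumSum_strictMono ha).le_iff_le]]
    rfl

theorem sum_filter_cumSum_mem_Ioc (ha : ∀ p, 0 < a p) {u v : ℕ}
    (hu : u ∈ insert 0 (univ.image (cumSum a))) (hv : v ∈ insert 0 (univ.image (cumSum a)))
    (huv : u ≤ v) : ∑ p with cumSum a p ∈ Ioc u v, a p = v - u := by
  have hsub : univ.filter (cumSum a · ≤ u) ⊆ univ.filter (cumSum a · ≤ v) :=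
    monotone_filter_right _ fun _ _ h => h.trans huv
  have hdiff : univ.filter (cumSum a · ≤ v) \ univ.filter (cumSum a · ≤ u) =
      univ.filter (cumSum a · ∈ Ioc u v) := by
    ext; simp [and_comm]
  have := sum_sdiff hsub (f := a)
  rw [hdiff, sum_filter_cumSum_le ha hu, sum_filter_cumSum_le ha hv] at this
  omega

theorem card_filter_cumSum_mem (ha : ∀ p, 0 < a p) (I : Finset ℕ) :
    #{p | cumSum a p ∈ I} = #(univ.image (cumSum a) ∩ I) := by
  rw [← filter_mem_eq_inter, filter_image,
    card_image_of_injective _ (cumSum_strictMono ha).injective]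

end CumSum

theorem sum_card_filter_mem_eq_sum_card_inter {ι α : Type*} [Fintype ι] [DecidableEq α]
    (S : ι → Finset α) (I : Finset α) : ∑ x ∈ I, #{i | x ∈ S i} = ∑ i, #(S i ∩ I) := by
  simp_rw [card_filter, inter_comm _ I, ← filter_mem_eq_inter, card_filter]
  exact sum_comm

theorem exists_eq_iff_mem_Ioc_of_monotone {β : Type*} [LinearOrder β] {k t : ℕ} {Y : ℕ → β}
    (hY : Monotone Y) (e : Fin k → β) (he : ∀ p, e p ∈ Set.Ioc (Y 0) (Y t)) :
    ∃ r : Fin k → Fin t, ∀ p j, r p = j ↔ e p ∈ Set.Ioc (Y j) (Y (j + 1)) := by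
  have key : ∀ p, ∃ j : Fin t, e p ∈ Set.Ioc (Y j) (Y (j + 1)) := fun p => by
    have := he p
    rw [← hY.biUnion_Ico_Ioc_map_succ] at this
    simp only [Set.mem_iUnion, Set.mem_Ico, Order.succ_eq_add_one] at this
    obtain ⟨j, ⟨-, hj⟩, hej⟩ := this
    exact ⟨⟨j, hj⟩, hej⟩
  choose r hr using key
  refine ⟨r, fun p j => ⟨fun h => h ▸ hr p, fun hj => Fin.ext ?_⟩⟩
  by_contra hne
  have := hY.pairwise_disjoint_on_Ioc_succ hne
  simp only [Function.onFun, Order.succ_eq_add_one] at this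
  exact Set.disjoint_left.mp this (hr p) hj

theorem exists_common_cuts {ι : Type*} [Fintype ι] (S : ι → Finset ℕ) {d t : ℕ}
    (hS : ∀ i, S i ⊆ Ioc 0 d) (hdS : ∀ i, d ∈ S i) (ht : 1 ≤ t)
    (htot : (t : ℤ) = ∑ i, (#(S i) : ℤ) - d * (Fintype.card ι - 1)) :
    ∃ Y : ℕ → ℕ, Monotone Y ∧ Y 0 = 0 ∧ Y t = d ∧ (∀ j ≤ t, ∀ i, Y j ∈ insert 0 (S i)) ∧
      ∀ j < t, Y j < Y (j + 1) ∧
        (∑ i, #(S i ∩ Ioc (Y j) (Y (j + 1))) : ℤ) =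
          (Fintype.card ι - 1) * (Y (j + 1) - Y j : ℕ) + 1 := by
  set w : ℕ → ℤ := fun x => #{i | x ∈ S i} - (Fintype.card ι - 1)
  have hw : ∀ x, w x ≤ 1 := fun x => by
    have := card_filter_le (univ : Finset ι) (x ∈ S ·)
    simp only [card_univ] at this
    simp only [w]
    omega
  have hw_eq : ∀ x, w x = 1 → ∀ i, x ∈ S i := fun x hx i => by
    have : #{i | x ∈ S i} = #(univ : Finset ι) := by simp only [card_univ, w] at hx ⊢; omega
    exact card_filter_eq_iff.mp this i (mem_univ i)
  have hsum : ∀ u v, ∑ x ∈ Ioc u v, w x =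
      ∑ i, (#(S i ∩ Ioc u v) : ℤ) - (Fintype.card ι - 1) * (v - u : ℕ) := fun u v => by
    rw [sum_sub_distrib, ← Nat.cast_sum, ← Nat.cast_sum, sum_card_filter_mem_eq_sum_card_inter,
      sum_const, Nat.card_Ioc, nsmul_eq_mul, mul_comm]
  obtain ⟨Y, hY, hY0, hYt, hYw⟩ := exists_monotone_cuts_sum_Ioc_eq_one hw ht (n := d) (by
    rw [hsum, htot]
    simp [inter_eq_left.mpr (hS _), mul_comm])
  refine ⟨Y, hY, hY0, hYt, fun j hj i => ?_, fun j hj => ?_⟩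
  · rcases Nat.eq_zero_or_pos j with rfl | hj0
    · simp [hY0]
    rcases hj.lt_or_eq with hjt | rfl
    · exact mem_insert_of_mem (hw_eq _ ((hYw j hjt).2 hj0) i)
    · exact hYt ▸ mem_insert_of_mem (hdS i)
  · have h1 := (hYw j hj).1
    rw [hsum] at h1
    have hlt : Y j < Y (j + 1) := by
      by_contra hle
      simp [Ioc_eq_empty_of_le (not_lt.mp hle), Nat.sub_eq_zero_of_le (not_lt.mp hle)] at h1
    exact ⟨hlt, by linarith⟩

/-- **partition refinement lemma.** Let `d, m ≥ 1`, and for `i = 1,…,m` let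
`a i = (a i 1, …, a i (k i))` be a partition of `d` of length `k i` (positive entries
summing to `d`).  Suppose `t = k 1 + ⋯ + k m − d(m−1) ≥ 1`.  Then there exist a partition
`c = (c 1, …, c t)` of `d` of length `t` and refinement maps `r i : Fin (k i) → Fin t`
(so the entries of `a i` indexed by `(r i)⁻¹(j)` sum to `c j`), such that for every `j`
the total number of parts refining `c j`, summed over `i`, is `c j · (m−1) + 1`. -/
theorem partition_refinement_lemma
    (d m : ℕ) (hd : 1 ≤ d) (hm : 1 ≤ m)
    (k : Fin m → ℕ) (a : ∀ i, Fin (k i) → ℕ)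
    (hpos : ∀ i p, 0 < a i p) (hsum : ∀ i, ∑ p, a i p = d)
    (t : ℕ) (ht : (t : ℤ) = (∑ i, (k i : ℤ)) - (d : ℤ) * ((m : ℤ) - 1)) (htpos : 1 ≤ t) :
    ∃ (c : Fin t → ℕ) (r : ∀ i, Fin (k i) → Fin t),
      (∀ j, 0 < c j) ∧ (∑ j, c j = d) ∧
      (∀ i j, ∑ p ∈ Finset.univ.filter (fun p => r i p = j), a i p = c j) ∧
      (∀ j, (∑ i, (Finset.univ.filter (fun p => r i p = j)).card) = c j * (m - 1) + 1) := by
  set S : Fin m → Finset ℕ := fun i => univ.image (cumSum (a i))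
  have hS : ∀ i, S i ⊆ Ioc 0 d := fun i => hsum i ▸ image_cumSum_subset_Ioc (hpos i)
  have hdS : ∀ i, d ∈ S i := fun i => hsum i ▸ sum_mem_image_cumSum (by rw [hsum i]; omega)
  have hcard : ∀ i, #(S i) = k i := fun i => by
    rw [card_image_of_injective _ (cumSum_strictMono (hpos i)).injective, card_univ,
      Fintype.card_fin]
  obtain ⟨Y, hY, hY0, hYt, hYS, hYcount⟩ :=
    exists_common_cuts S hS hdS htpos (by simpa [hcard] using ht)
  choose r hr using fun i =>
    exists_eq_iff_mem_Ioc_of_monotone (t := t) hY (cumSum (a i)) fun p => by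
      simpa [hY0, hYt] using hS i (mem_image_of_mem _ (mem_univ p))
  have hfiber : ∀ i (j : Fin t),
      univ.filter (r i · = j) = univ.filter (cumSum (a i) · ∈ Ioc (Y j) (Y (j + 1))) :=
    fun i j => by ext p; simp [hr]
  refine ⟨fun j => Y (j + 1) - Y j, r, fun j => Nat.sub_pos_of_lt (hYcount j j.2).1, ?_,
    fun i j => ?_, fun j => ?_⟩
  · rw [Fin.sum_univ_eq_sum_range (fun j => Y (j + 1) - Y j), sum_range_tsub hY, hY0, hYt,
      Nat.sub_zero]
  · rw [hfiber, sum_filter_cumSum_mem_Ioc (hpos i) (hYS j j.2.le i) (hYS (j + 1) j.2 i)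
      (hY (Nat.le_succ j))]
  · simp_rw [hfiber, card_filter_cumSum_mem (hpos _)]
    have := (hYcount j j.2).2
    zify [hm]
    simp only [Fintype.card_fin] at this
    linarith
end
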